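/- arXiv:2511.19894 — 3 statements merged into one kernel-verified Lean document; each statement's English description precedes it below -/
import Mathlib

section
/- Cayley's formula: the complete graph on m vertices has exactly m^(m-2) spanning trees, for m ≥ 1. -/
/-!
Prüfer's bijection. Order the vertices linearly. A code for a vertex set `S` with `#S = k + 2` is
a list of `k` elements of `S`. It is decoded by joining the least vertex `l` of `S` missing from
the code to the head of the code and decoding the tail on `S \ {l}`; the empty code joins the
last two vertices. By induction the result is a tree whose leaves are exactly the vertices missing
from the code. So the least leaf and its neighbour, hence the whole code, can be read back from
the tree, and every tree arises by pruning its least leaf: decoding is a bijection from the codes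
onto the trees on `S`, of which there are therefore `#S ^ (#S - 2)`.
-/

open Finset SimpleGraph

/-- A vertex whose only neighbour is `m` cannot lie on a path that does not end at it, as its
two path-neighbours would both be `m`. -/
lemma SimpleGraph.Walk.IsPath.notMem_support_of_forall_adj_eq {V : Type*} [DecidableEq V]
    {G : SimpleGraph V} {u v l m : V} {p : G.Walk u v} (hp : p.IsPath) (hu : u ≠ l) (hv : v ≠ l)
    (hl : ∀ x, G.Adj l x → x = m) : l ∉ p.support := by
  intro hmem
  obtain ⟨x, hx, q, hq⟩ := Walk.exists_eq_cons_of_ne hu.symm (p.takeUntil l hmem).reverse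
  obtain ⟨y, hy, r, hr⟩ := Walk.exists_eq_cons_of_ne hv.symm (p.dropUntil l hmem)
  have h1 : m ∈ (p.takeUntil l hmem).support := by
    rw [← List.mem_reverse, ← Walk.support_reverse, hq, ← hl x hx]
    exact Walk.start_mem_support _ |> List.mem_cons_of_mem _
  have h2 : m ∈ (p.dropUntil l hmem).support.tail := by
    rw [hr, Walk.support_cons, List.tail_cons, ← hl y hy]
    exact Walk.start_mem_support r
  have hnd := hp.support_nodup
  rw [← Walk.take_spec p hmem, Walk.support_append, List.nodup_append'] at hnd
  exact hnd.2.2 h1 h2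

namespace Prufer

variable {V : Type*}

/-- `E` is the edge set of a tree with vertex set `S`. Acyclicity is not recorded: a connected
graph with one edge fewer than vertices is a tree. -/
structure IsTreeOn (S : Finset V) (E : Finset (Sym2 V)) : Prop where
  mem_of_mem_edge : ∀ e ∈ E, ∀ v ∈ e, v ∈ S
  not_isDiag : ∀ e ∈ E, ¬ e.IsDiag
  reachable : ∀ u ∈ S, ∀ v ∈ S, (fromEdgeSet (E : Set (Sym2 V))).Reachable u v
  card_add_one : #E + 1 = #S

lemma isTreeOn_singleton (v : V) : IsTreeOn {v} ∅ where
  mem_of_mem_edge := by simp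
  not_isDiag := by simp
  reachable := by simp
  card_add_one := rfl

lemma IsTreeOn.mk_notMem_of_notMem {S : Finset V} {E : Finset (Sym2 V)} (h : IsTreeOn S E) {u : V}
    (hu : u ∉ S) (v : V) : s(u, v) ∉ E :=
  fun he => hu (h.mem_of_mem_edge _ he u (Sym2.mem_mk_left _ _))

section DecidableEq

variable [DecidableEq V]

def edgeDegree (E : Finset (Sym2 V)) (v : V) : ℕ := #{e ∈ E | v ∈ e}

def leaves (S : Finset V) (E : Finset (Sym2 V)) : Finset V := {v ∈ S | edgeDegree E v = 1}

lemma edgeDegree_insert {E : Finset (Sym2 V)} {e : Sym2 V} (he : e ∉ E) (v : V) :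
    edgeDegree (insert e E) v = edgeDegree E v + if v ∈ e then 1 else 0 := by
  unfold edgeDegree
  rw [filter_insert]
  split_ifs
  · exact card_insert_of_notMem fun h => he (mem_filter.mp h).1
  · rfl

lemma edgeDegree_eq_zero {E : Finset (Sym2 V)} {v : V} : edgeDegree E v = 0 ↔ ∀ e ∈ E, v ∉ e := by
  simp [edgeDegree, filter_eq_empty_iff]

lemma eq_of_edgeDegree_eq_one {E : Finset (Sym2 V)} {v : V} (h : edgeDegree E v = 1)
    {e e' : Sym2 V} (he : e ∈ E) (hve : v ∈ e) (he' : e' ∈ E) (hve' : v ∈ e') : e = e' :=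
  card_le_one.mp h.le e (mem_filter.mpr ⟨he, hve⟩) e' (mem_filter.mpr ⟨he', hve'⟩)

lemma sum_edgeDegree {S : Finset V} {E : Finset (Sym2 V)} (hS : ∀ e ∈ E, ∀ v ∈ e, v ∈ S)
    (hE : ∀ e ∈ E, ¬ e.IsDiag) : ∑ v ∈ S, edgeDegree E v = 2 * #E := by
  have hcard : ∀ e ∈ E, #{v ∈ S | v ∈ e} = 2 := fun e he => by
    rw [← e.card_toFinset_of_not_isDiag (hE e he)]
    congr 1
    ext v
    simpa [Sym2.mem_toFinset] using hS e he v
  calc ∑ v ∈ S, edgeDegree E v = ∑ e ∈ E, #{v ∈ S | v ∈ e} := by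
        simp only [edgeDegree, card_filter]
        exact sum_comm
    _ = 2 * #E := by rw [sum_congr rfl hcard, sum_const, smul_eq_mul, mul_comm]

lemma exists_mk_mem_of_edgeDegree_pos {E : Finset (Sym2 V)} {v : V} (h : 0 < edgeDegree E v) :
    ∃ w, s(v, w) ∈ E := by
  obtain ⟨e, he⟩ := card_pos.mp h
  obtain ⟨heE, hve⟩ := mem_filter.mp he
  obtain ⟨w, rfl⟩ := Sym2.mem_iff_exists.mp hve
  exact ⟨w, heE⟩

lemma sdiff_toFinset_nonempty {S : Finset V} {a : List V} (h : a.length < #S) :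
    (S \ a.toFinset).Nonempty := by
  rw [sdiff_nonempty]
  intro hS
  have := card_le_card hS
  have := a.toFinset_card_le
  omega

lemma forall_mem_erase_of_notMem {S : Finset V} {l : V} {a : List V} (hla : l ∉ a)
    (ha : ∀ y ∈ a, y ∈ S) : ∀ y ∈ a, y ∈ S.erase l :=
  fun y hy => mem_erase.mpr ⟨fun h => hla (h ▸ hy), ha y hy⟩

lemma insert_erase_sdiff_toFinset {S : Finset V} {l x : V} {a : List V} (hl : l ∈ S)
    (hla : l ∉ x :: a) : insert l ((S.erase l \ a.toFinset).erase x) = S \ (x :: a).toFinset := by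
  ext v
  simp only [mem_insert, mem_erase, mem_sdiff, List.mem_toFinset, List.mem_cons, not_or]
  by_cases hv : v = l
  · subst hv
    simp_all
  · tauto

namespace IsTreeOn

variable {S : Finset V} {E : Finset (Sym2 V)}

lemma edgeDegree_pos (h : IsTreeOn S E) (hS : 2 ≤ #S) {v : V} (hv : v ∈ S) :
    0 < edgeDegree E v := by
  obtain ⟨u, hu, hne⟩ := exists_mem_ne hS v
  obtain ⟨w⟩ := h.reachable v hv u hu
  obtain ⟨z, hadj, -, rfl⟩ := Walk.exists_eq_cons_of_ne hne.symm w
  exact card_pos.mpr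
    ⟨s(v, z), mem_filter.mpr ⟨((fromEdgeSet_adj _).mp hadj).1, Sym2.mem_mk_left _ _⟩⟩

lemma leaves_nonempty (h : IsTreeOn S E) (hS : 2 ≤ #S) : (leaves S E).Nonempty := by
  by_contra hL
  have h2 : ∀ v ∈ S, 2 ≤ edgeDegree E v := fun v hv => by
    have := h.edgeDegree_pos hS hv
    have : edgeDegree E v ≠ 1 := fun h1 => hL ⟨v, mem_filter.mpr ⟨hv, h1⟩⟩
    omega
  have := sum_le_sum h2
  rw [sum_const, smul_eq_mul, sum_edgeDegree h.mem_of_mem_edge h.not_isDiag] at this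
  have := h.card_add_one
  omega

lemma insert_edge (h : IsTreeOn S E) {u v : V} (hu : u ∉ S) (hv : v ∈ S) :
    IsTreeOn (insert u S) (insert s(u, v) E) := by
  have huv : u ≠ v := ne_of_mem_of_not_mem hv hu |>.symm
  have hE := h.mk_notMem_of_notMem hu v
  have hle : fromEdgeSet (E : Set (Sym2 V)) ≤ fromEdgeSet ↑(insert s(u, v) E) :=
    fromEdgeSet_mono (by simp)
  have hreach : ∀ w ∈ insert u S, (fromEdgeSet ↑(insert s(u, v) E)).Reachable w v := by
    intro w hw
    rcases mem_insert.mp hw with rfl | hw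
    · exact Adj.reachable ((fromEdgeSet_adj _).mpr ⟨by simp, huv⟩)
    · exact (h.reachable w hw v hv).mono hle
  refine ⟨?_, ?_, fun a ha b hb => (hreach a ha).trans (hreach b hb).symm, ?_⟩
  · intro e he w hw
    rcases mem_insert.mp he with rfl | he
    · rcases Sym2.mem_iff.mp hw with rfl | rfl
      · exact mem_insert_self _ _
      · exact mem_insert_of_mem hv
    · exact mem_insert_of_mem (h.mem_of_mem_edge e he w hw)
  · intro e he
    rcases mem_insert.mp he with rfl | he
    · simpa using huv
    · exact h.not_isDiag e he
  · rw [card_insert_of_notMem hE, card_insert_of_notMem hu, h.card_add_one]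

lemma erase_leaf (h : IsTreeOn S E) {l m : V} (hl : l ∈ leaves S E) (hlm : s(l, m) ∈ E) :
    IsTreeOn (S.erase l) (E.erase s(l, m)) := by
  obtain ⟨hlS, hdeg⟩ := mem_filter.mp hl
  have hunique : ∀ e ∈ E, l ∈ e → e = s(l, m) := fun e he hle =>
    eq_of_edgeDegree_eq_one hdeg he hle hlm (Sym2.mem_mk_left _ _)
  have hle : fromEdgeSet ↑(E.erase s(l, m)) ≤ fromEdgeSet (E : Set (Sym2 V)) :=
    fromEdgeSet_mono (by simp)
  refine ⟨?_, fun e he => h.not_isDiag e (mem_of_mem_erase he), ?_, ?_⟩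
  · intro e he w hw
    refine mem_erase.mpr ⟨?_, h.mem_of_mem_edge e (mem_of_mem_erase he) w hw⟩
    rintro rfl
    exact ne_of_mem_erase he (hunique e (mem_of_mem_erase he) hw)
  · intro a ha b hb
    obtain ⟨w⟩ := h.reachable a (mem_of_mem_erase ha) b (mem_of_mem_erase hb)
    have hl' : l ∉ w.bypass.support :=
      w.bypass_isPath.notMem_support_of_forall_adj_eq (ne_of_mem_erase ha) (ne_of_mem_erase hb)
        fun x hx => Sym2.congr_right.mp (hunique _ ((fromEdgeSet_adj _).mp hx).1 (by simp))
    refine ⟨w.bypass.transfer _ fun e he => ?_⟩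
    have hE := w.bypass.edges_subset_edgeSet he
    rw [edgeSet_fromEdgeSet] at hE ⊢
    refine ⟨mem_erase.mpr ⟨?_, hE.1⟩, hE.2⟩
    rintro rfl
    exact hl' (w.bypass.fst_mem_support_of_mem_edges he)
  · have := h.card_add_one
    have := card_pos.mpr ⟨_, hlm⟩
    rw [card_erase_of_mem hlm, card_erase_of_mem hlS]
    omega

lemma leaves_insert_edge (h : IsTreeOn S E) (hS : 2 ≤ #S) {u v : V} (hu : u ∉ S) (hv : v ∈ S) :
    leaves (insert u S) (insert s(u, v) E) = insert u ((leaves S E).erase v) := by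
  have hE := h.mk_notMem_of_notMem hu v
  ext w
  simp only [leaves, mem_filter, mem_insert, mem_erase, edgeDegree_insert hE, Sym2.mem_iff]
  by_cases hwu : w = u
  · subst hwu
    have : edgeDegree E w = 0 :=
      edgeDegree_eq_zero.mpr fun e he hwe => hu (h.mem_of_mem_edge e he w hwe)
    simp [this]
  by_cases hwv : w = v
  · subst hwv
    have := h.edgeDegree_pos hS hv
    simp only [hwu, or_true, if_true, false_or, ne_eq, not_true, false_and, iff_false]
    omega
  · simp [hwu, hwv]

lemma eq_singleton_of_pair {x y : V} (h : IsTreeOn {x, y} E)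
    (hxy : x ≠ y) : E = {s(x, y)} := by
  obtain ⟨e, rfl⟩ := card_eq_one.mp (by simpa [card_pair hxy] using h.card_add_one)
  induction e with
  | _ p q =>
    have hp := h.mem_of_mem_edge _ (mem_singleton_self _) p (Sym2.mem_mk_left _ _)
    have hq := h.mem_of_mem_edge _ (mem_singleton_self _) q (Sym2.mem_mk_right _ _)
    have hpq : p ≠ q := by simpa using h.not_isDiag _ (mem_singleton_self _)
    simp only [mem_insert, mem_singleton] at hp hq
    rcases hp with rfl | rfl <;> rcases hq with rfl | rfl <;> simp_all [Sym2.eq_swap]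

end IsTreeOn

end DecidableEq

section LinearOrder

variable [LinearOrder V]

/-- The `∅` branches are junk: they are not reached when `#S = a.length + 2`. -/
def decode : Finset V → List V → Finset (Sym2 V)
  | S, [] => if h : S.Nonempty then {s(S.min' h, S.max' h)} else ∅
  | S, x :: a =>
    if h : (S \ (x :: a).toFinset).Nonempty then
      insert s((S \ (x :: a).toFinset).min' h, x)
        (decode (S.erase ((S \ (x :: a).toFinset).min' h)) a)
    else ∅

lemma decode_nil {S : Finset V} (hS : #S = 2) :
    ∃ x y, x ≠ y ∧ S = {x, y} ∧ decode S [] = {s(x, y)} := by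
  have hne : S.Nonempty := card_pos.mp (by omega)
  have hlt := S.min'_lt_max'_of_card (by omega)
  refine ⟨_, _, hlt.ne, ?_, by rw [decode, dif_pos hne]⟩
  refine (eq_of_subset_of_card_le ?_ ?_).symm
  · exact insert_subset (S.min'_mem hne) (singleton_subset_iff.mpr (S.max'_mem hne))
  · rw [card_pair hlt.ne, hS]

lemma exists_decode_cons {S : Finset V} {x : V} {a : List V} (hS : #S = (x :: a).length + 2)
    (ha : ∀ y ∈ x :: a, y ∈ S) :
    ∃ l, IsLeast ↑(S \ (x :: a).toFinset) l ∧ l ∈ S ∧ l ∉ x :: a ∧ #(S.erase l) = a.length + 2 ∧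
      x ∈ S.erase l ∧ (∀ y ∈ a, y ∈ S.erase l) ∧
      decode S (x :: a) = insert s(l, x) (decode (S.erase l) a) := by
  have hne := sdiff_toFinset_nonempty (S := S) (a := x :: a) (by omega)
  set l := (S \ (x :: a).toFinset).min' hne
  obtain ⟨hlS, hla⟩ := mem_sdiff.mp (min'_mem _ hne)
  have hla := List.mem_toFinset.not.mp hla
  have ha' := forall_mem_erase_of_notMem hla ha
  refine ⟨l, isLeast_min' _ hne, hlS, hla, ?_, ha' x List.mem_cons_self,
    fun y hy => ha' y (List.mem_cons_of_mem _ hy), by rw [decode, dif_pos hne]⟩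
  rw [card_erase_of_mem hlS, hS, List.length_cons]
  omega

lemma isTreeOn_decode : ∀ {S : Finset V} {a : List V}, #S = a.length + 2 → (∀ y ∈ a, y ∈ S) →
    IsTreeOn S (decode S a)
  | S, [], hS, _ => by
    obtain ⟨x, y, hxy, rfl, hdec⟩ := decode_nil hS
    rw [hdec]
    simpa using (isTreeOn_singleton y).insert_edge (by simpa using hxy) (mem_singleton_self y)
  | S, x :: a, hS, ha => by
    obtain ⟨l, -, hlS, -, hcard, hx, ha', hdec⟩ := exists_decode_cons hS ha
    rw [hdec]
    simpa only [insert_erase hlS] using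
      (isTreeOn_decode hcard ha').insert_edge (notMem_erase l S) hx

lemma leaves_decode : ∀ {S : Finset V} {a : List V}, #S = a.length + 2 → (∀ y ∈ a, y ∈ S) →
    leaves S (decode S a) = S \ a.toFinset
  | S, [], hS, _ => by
    obtain ⟨x, y, hxy, rfl, hdec⟩ := decode_nil hS
    ext v
    simp +contextual [hdec, leaves, edgeDegree, filter_singleton]
  | S, x :: a, hS, ha => by
    obtain ⟨l, -, hlS, hla, hcard, hx, ha', hdec⟩ := exists_decode_cons hS ha
    have := (isTreeOn_decode hcard ha').leaves_insert_edge (by omega) (notMem_erase l S) hx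
    rw [insert_erase hlS, leaves_decode hcard ha'] at this
    rw [hdec, this, insert_erase_sdiff_toFinset hlS hla]

lemma eq_of_decode_eq : ∀ {S : Finset V} {a b : List V}, #S = a.length + 2 →
    a.length = b.length → (∀ y ∈ a, y ∈ S) → (∀ y ∈ b, y ∈ S) → decode S a = decode S b → a = b
  | _, [], b, _, hab, _, _, _ => (List.length_eq_zero_iff.mp hab.symm).symm
  | _, _ :: _, [], _, hab, _, _, _ => by simp at hab
  | S, x :: a, y :: b, hS, hab, ha, hb, hdec => by
    obtain ⟨l, hl, -, -, hcard, -, ha', hdeca⟩ := exists_decode_cons hS ha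
    have hSb : #S = (y :: b).length + 2 := hab ▸ hS
    obtain ⟨l', hl', -, -, -, -, hb', hdecb⟩ := exists_decode_cons hSb hb
    have hleaves : S \ (x :: a).toFinset = S \ (y :: b).toFinset := by
      rw [← leaves_decode hS ha, hdec, leaves_decode hSb hb]
    obtain rfl : l = l' := hl.unique (hleaves ▸ hl')
    have hleaf : l ∈ leaves S (decode S (x :: a)) := by
      rw [leaves_decode hS ha]
      exact mem_coe.mp hl.1
    have hlx : s(l, x) ∈ decode S (x :: a) := hdeca ▸ mem_insert_self _ _
    have hly : s(l, y) ∈ decode S (x :: a) := hdec ▸ hdecb ▸ mem_insert_self _ _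
    obtain rfl : x = y := Sym2.congr_right.mp <|
      eq_of_edgeDegree_eq_one (mem_filter.mp hleaf).2 hlx (Sym2.mem_mk_left _ _) hly
        (Sym2.mem_mk_left _ _)
    have hab' : a.length = b.length := by simpa using hab
    have htails : decode (S.erase l) a = decode (S.erase l) b := by
      rw [← erase_insert ((isTreeOn_decode hcard ha').mk_notMem_of_notMem (notMem_erase l S) x),
        ← erase_insert ((isTreeOn_decode (hab' ▸ hcard) hb').mk_notMem_of_notMem
          (notMem_erase l S) x), ← hdeca, ← hdecb, hdec]
    rw [eq_of_decode_eq hcard hab' ha' hb' htails]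

lemma exists_decode_eq : ∀ (n : ℕ) {S : Finset V} {E : Finset (Sym2 V)}, #S = n + 2 →
    IsTreeOn S E → ∃ a : List V, a.length = n ∧ (∀ y ∈ a, y ∈ S) ∧ decode S a = E
  | 0, S, E, hS, h => by
    obtain ⟨x, y, hxy, rfl, hdec⟩ := decode_nil hS
    exact ⟨[], rfl, by simp, hdec.trans (h.eq_singleton_of_pair hxy).symm⟩
  | n + 1, S, E, hS, h => by
    have hL := h.leaves_nonempty (by omega)
    set l := (leaves S E).min' hL
    have hl : l ∈ leaves S E := min'_mem _ hL
    obtain ⟨hlS, hdeg⟩ := mem_filter.mp hl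
    obtain ⟨m, hlm⟩ := exists_mk_mem_of_edgeDegree_pos (E := E) (v := l) (by omega)
    have hm : m ∈ S.erase l := by
      refine mem_erase.mpr ⟨?_, h.mem_of_mem_edge _ hlm m (Sym2.mem_mk_right _ _)⟩
      rintro rfl
      exact h.not_isDiag _ hlm (Sym2.mk_isDiag_iff.mpr rfl)
    have hcard : #(S.erase l) = n + 2 := by rw [card_erase_of_mem hlS]; omega
    have h' := h.erase_leaf hl hlm
    obtain ⟨a, rfl, ha, hdec⟩ := exists_decode_eq n hcard h'
    have hla : l ∉ m :: a := by
      simp only [List.mem_cons, not_or]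
      exact ⟨(ne_of_mem_erase hm).symm, fun hl => notMem_erase l S (ha l hl)⟩
    have hleaves : leaves S E = S \ (m :: a).toFinset := by
      have := h'.leaves_insert_edge (by omega) (notMem_erase l S) hm
      rwa [insert_erase hlS, insert_erase hlm, ← hdec, leaves_decode hcard ha,
        insert_erase_sdiff_toFinset hlS hla] at this
    have hma : ∀ y ∈ m :: a, y ∈ S := by
      simpa [List.mem_cons] using ⟨mem_of_mem_erase hm, fun y hy => mem_of_mem_erase (ha y hy)⟩
    obtain ⟨l', hl', -, -, -, -, -, hdec'⟩ := exists_decode_cons (by simpa using hS) hma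
    obtain rfl : l' = l := hl'.unique (hleaves ▸ isLeast_min' _ hL)
    exact ⟨m :: a, rfl, hma, by rw [hdec', hdec, insert_erase hlm]⟩

lemma card_isTreeOn_univ_of_card_eq_add_two [Fintype V] {k : ℕ} (hV : Fintype.card V = k + 2) :
    Nat.card {E : Finset (Sym2 V) // IsTreeOn univ E} = Fintype.card V ^ k := by
  have hS : #(univ : Finset V) = k + 2 := card_univ.trans hV
  let f (a : List.Vector V k) : {E : Finset (Sym2 V) // IsTreeOn univ E} :=
    ⟨decode univ a.1, isTreeOn_decode (hS.trans (by rw [a.2])) (by simp)⟩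
  have hf : Function.Bijective f := by
    refine ⟨fun a b hab => Subtype.ext ?_, fun E => ?_⟩
    · exact eq_of_decode_eq (hS.trans (by rw [a.2])) (a.2.trans b.2.symm) (by simp) (by simp)
        (congrArg Subtype.val hab)
    · obtain ⟨a, ha, -, hdec⟩ := exists_decode_eq k hS E.2
      exact ⟨⟨a, ha⟩, Subtype.ext hdec⟩
  rw [← Nat.card_congr (Equiv.ofBijective f hf), Nat.card_eq_fintype_card, card_vector]

end LinearOrder

lemma card_isTreeOn_univ_of_card_eq_one [Fintype V] (hV : Fintype.card V = 1) :
    Nat.card {E : Finset (Sym2 V) // IsTreeOn univ E} = 1 := by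
  obtain ⟨v, hv⟩ := card_eq_one.mp (card_univ.trans hV)
  refine Nat.card_eq_one_iff_exists.mpr ⟨⟨∅, hv ▸ isTreeOn_singleton v⟩, fun E => ?_⟩
  have := E.2.card_add_one
  rw [card_univ, hV] at this
  exact Subtype.ext (card_eq_zero.mp (by omega))

lemma edgeSet_fromEdgeSet_coe {E : Finset (Sym2 V)} (hE : ∀ e ∈ E, ¬ e.IsDiag) :
    (fromEdgeSet (E : Set (Sym2 V))).edgeSet = E := by
  rw [edgeSet_fromEdgeSet, sdiff_eq_left, Set.disjoint_left]
  exact fun e he => hE e he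

lemma isTree_fromEdgeSet_iff [Fintype V] {E : Finset (Sym2 V)} (hE : ∀ e ∈ E, ¬ e.IsDiag) :
    (fromEdgeSet (E : Set (Sym2 V))).IsTree ↔ IsTreeOn univ E := by
  rw [isTree_iff_connected_and_card, connected_iff, edgeSet_fromEdgeSet_coe hE, Nat.card_coe_set_eq,
    Set.ncard_coe_finset, Nat.card_eq_fintype_card, ← card_univ]
  refine ⟨fun ⟨⟨hconn, _⟩, hcard⟩ => ⟨by simp, hE, fun u _ v _ => hconn u v, hcard⟩,
    fun h => ⟨⟨fun u v => h.reachable u (mem_univ u) v (mem_univ v), ?_⟩, h.card_add_one⟩⟩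
  exact univ_nonempty_iff.mp (card_pos.mp (by have := h.card_add_one; omega))

lemma card_isTree_eq_card_isTreeOn_univ [Fintype V] :
    Nat.card {T : SimpleGraph V // T.IsTree} =
      Nat.card {E : Finset (Sym2 V) // IsTreeOn univ E} := by
  classical
  let f (E : {E : Finset (Sym2 V) // IsTreeOn univ E}) : {T : SimpleGraph V // T.IsTree} :=
    ⟨fromEdgeSet E.1, (isTree_fromEdgeSet_iff E.2.not_isDiag).mpr E.2⟩
  have hf : Function.Bijective f := by
    refine ⟨fun E E' h => Subtype.ext ?_, fun T => ?_⟩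
    · apply coe_injective
      have h : fromEdgeSet (E.1 : Set (Sym2 V)) = fromEdgeSet E'.1 := congrArg Subtype.val h
      rw [← edgeSet_fromEdgeSet_coe E.2.not_isDiag, h, edgeSet_fromEdgeSet_coe E'.2.not_isDiag]
    · have hE : ∀ e ∈ T.1.edgeFinset, ¬ e.IsDiag :=
        fun e he => T.1.not_isDiag_of_mem_edgeSet (mem_edgeFinset.mp he)
      have hT : fromEdgeSet (T.1.edgeFinset : Set (Sym2 V)) = T.1 := by
        rw [coe_edgeFinset, fromEdgeSet_edgeSet]
      exact ⟨⟨T.1.edgeFinset, (isTree_fromEdgeSet_iff hE).mp (hT.symm ▸ T.2)⟩, Subtype.ext hT⟩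
  exact (Nat.card_congr (Equiv.ofBijective f hf)).symm

end Prufer

/-- Cayley's formula: the complete graph on `m ≥ 1` vertices has exactly
`m ^ (m - 2)` spanning trees.  A spanning tree of the complete graph on the
vertex type `V` is a simple graph on `V` (hence containing all vertices) that
is a tree (it is automatically a subgraph of `⊤`). -/
theorem cayley_formula {V : Type*} [Fintype V] (hm : 1 ≤ Fintype.card V) :
    Nat.card {T : SimpleGraph V // T ≤ ⊤ ∧ T.IsTree}
      = Fintype.card V ^ (Fintype.card V - 2) := by
  let : LinearOrder V := LinearOrder.lift' _ (Fintype.equivFin V).injective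
  simp only [le_top, true_and]
  rw [Prufer.card_isTree_eq_card_isTreeOn_univ]
  obtain hV | hV := Nat.lt_or_ge (Fintype.card V) 2
  · rw [Prufer.card_isTreeOn_univ_of_card_eq_one (by omega), show Fintype.card V = 1 by omega]
    rfl
  · obtain ⟨k, hk⟩ := Nat.exists_eq_add_of_le' hV
    rw [Prufer.card_isTreeOn_univ_of_card_eq_add_two hk, hk, Nat.add_sub_cancel]
end

section
/- Let K be a finite connected weighted graph with positive injective edge weights, let T be its maximum spanning tree, and let U be the union over all vertices s of the shortest-path trees rooted at s computed with distances d(i,j) = 1/w(i,j). Then T ⊆ U ⊆ K (as edge sets). -/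
open SimpleGraph

/-- Total length of a walk with respect to edge distances `d`. -/
def walkCost {V : Type*} {K : SimpleGraph V} (d : Sym2 V → ℝ) {s t : V}
    (p : K.Walk s t) : ℝ :=
  (p.edges.map d).sum

/-- `p` is a shortest path from `s` to `t` with respect to edge distances `d`:
it is a path minimizing the total distance among all paths from `s` to `t`. -/
def IsShortestPath {V : Type*} {K : SimpleGraph V} (d : Sym2 V → ℝ) {s t : V}
    (p : K.Walk s t) : Prop :=
  p.IsPath ∧ ∀ q : K.Walk s t, q.IsPath → walkCost d p ≤ walkCost d q

/-- The union, over all roots `s`, of the shortest-path trees rooted at `s`,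
as an edge set: the set of edges lying on some shortest path. -/
def shortestPathUnion {V : Type*} (K : SimpleGraph V) (d : Sym2 V → ℝ) :
    Set (Sym2 V) :=
  {x | ∃ (s t : V) (p : K.Walk s t), IsShortestPath d p ∧ x ∈ p.edges}

/-- The total weight of (the edges of) a graph `T` with respect to `w`. -/
noncomputable def treeWeight {V : Type*} [Fintype V] (T : SimpleGraph V)
    (w : Sym2 V → ℝ) : ℝ :=
  ∑ e ∈ (Set.toFinite T.edgeSet).toFinset, w e

/-- `T` is a maximum spanning tree of `K` with respect to `w`. -/
def IsMaxSpanningTree {V : Type*} [Fintype V] (K : SimpleGraph V)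
    (w : Sym2 V → ℝ) (T : SimpleGraph V) : Prop :=
  T ≤ K ∧ T.IsTree ∧
    ∀ T' : SimpleGraph V, T' ≤ K → T'.IsTree → treeWeight T' w ≤ treeWeight T w

/-! Cycle property: if `uv` is an edge of a maximum spanning tree `T`, deleting it splits `T` into
two components, and any walk from `u` to `v` in `K` crosses between them along some edge `f`.
Exchanging `uv` for `f` gives another spanning tree, so `w f ≤ w(uv)`. With `d = 1 / w` this one
edge already costs at least `d(uv)`, so the edge `uv` is itself a shortest path. -/

namespace SimpleGraph

variable {V : Type*}

theorem Reachable.deleteEdges_reachable_or {G : SimpleGraph V} {u x : V} (h : G.Reachable u x)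
    (v : V) :
    (G.deleteEdges {s(u, v)}).Reachable x u ∨ (G.deleteEdges {s(u, v)}).Reachable x v := by
  rw [reachable_iff_reflTransGen] at h
  induction h with
  | refl => exact .inl .rfl
  | @tail y z _ hyz ih =>
    by_cases he : s(y, z) = s(u, v)
    · rcases Sym2.eq_iff.mp he with ⟨-, rfl⟩ | ⟨-, rfl⟩
      · exact .inr .rfl
      · exact .inl .rfl
    · have hzy : (G.deleteEdges {s(u, v)}).Adj z y :=
        (deleteEdges_adj ..).mpr ⟨hyz.symm, by rwa [Set.mem_singleton_iff, Sym2.eq_swap]⟩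
      exact ih.imp hzy.reachable.trans hzy.reachable.trans

theorem IsTree.deleteEdges_sup_edge_isTree {T : SimpleGraph V} (hT : T.IsTree) {u v a b : V}
    (ha : (T.deleteEdges {s(u, v)}).Reachable u a)
    (hb : ¬(T.deleteEdges {s(u, v)}).Reachable u b) :
    (T.deleteEdges {s(u, v)} ⊔ edge a b).IsTree := by
  set H := T.deleteEdges {s(u, v)}
  have hH : H.IsAcyclic := hT.isAcyclic.anti (deleteEdges_le _)
  have hab : ¬H.Reachable a b := fun h ↦ hb (ha.trans h)
  refine ⟨?_, hH.sup_edge_of_not_reachable hab⟩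
  have hle : H ≤ H ⊔ edge a b := le_sup_left
  have hba : (H ⊔ edge a b).Adj b a := .inr <| by
    simpa [edge_adj] using fun h : b = a ↦ hb (h ▸ ha)
  have hvb : H.Reachable v b :=
    ((hT.connected u b).deleteEdges_reachable_or v).resolve_left (fun h ↦ hb h.symm) |>.symm
  have hvu : (H ⊔ edge a b).Reachable v u :=
    (hvb.mono hle).trans <| (Adj.reachable hba).trans (ha.symm.mono hle)
  refine (connected_iff_exists_forall_reachable _).mpr ⟨u, fun x ↦ ?_⟩
  rcases (hT.connected u x).deleteEdges_reachable_or v with hx | hx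
  · exact hx.symm.mono hle
  · exact hvu.symm.trans (hx.symm.mono hle)

end SimpleGraph

section

variable {V : Type*}

theorem treeWeight_deleteEdges_sup_edge [Fintype V] (G : SimpleGraph V) (w : Sym2 V → ℝ)
    {e : Sym2 V} (he : e ∈ G.edgeSet) {a b : V} (hab : a ≠ b) (hf : s(a, b) ∉ G.edgeSet) :
    treeWeight (G.deleteEdges {e} ⊔ edge a b) w = treeWeight G w - w e + w s(a, b) := by
  classical
  have hedges : (Set.toFinite (G.deleteEdges {e} ⊔ edge a b).edgeSet).toFinset =
      insert s(a, b) ((Set.toFinite G.edgeSet).toFinset.erase e) := by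
    ext f
    simp [edgeSet_sup, edgeSet_deleteEdges, edgeSet_edge_of_ne hab, and_comm]
  rw [treeWeight, hedges, Finset.sum_insert (by simp [hf]),
    Finset.sum_erase_eq_sub (by simpa using he), add_comm]
  rfl

theorem IsMaxSpanningTree.exists_mem_edges_weight_le [Fintype V] {K T : SimpleGraph V}
    {w : Sym2 V → ℝ} (hT : IsMaxSpanningTree K w T) {u v : V} (huv : T.Adj u v)
    (q : K.Walk u v) : ∃ f ∈ q.edges, w f ≤ w s(u, v) := by
  obtain ⟨hTK, hTtree, hTmax⟩ := hT
  set H := T.deleteEdges {s(u, v)}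
  have hbridge : ¬H.Reachable u v := isAcyclic_iff_forall_adj_isBridge.mp hTtree.isAcyclic huv
  obtain ⟨⟨⟨a, b⟩, hab⟩, hd, ha, hb⟩ := q.exists_boundary_dart {x | H.Reachable u x} .rfl hbridge
  refine ⟨s(a, b), List.mem_map_of_mem hd, not_lt.mp fun hlt ↦ ?_⟩
  have hfT : s(a, b) ∉ T.edgeSet := fun hfT ↦ hb <| ha.trans <| Adj.reachable <|
    (deleteEdges_adj ..).mpr ⟨hfT, fun h ↦ hlt.ne (congrArg w h).symm⟩
  have hle : H ⊔ edge a b ≤ K :=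
    sup_le ((deleteEdges_le _).trans hTK) ((edge_le_iff K).mpr (.inr hab))
  have := hTmax _ hle (hTtree.deleteEdges_sup_edge_isTree ha hb)
  rw [treeWeight_deleteEdges_sup_edge T w huv hab.ne hfT] at this
  linarith

theorem le_walkCost_of_mem_edges {K : SimpleGraph V} {d : Sym2 V → ℝ} {s t : V} (q : K.Walk s t)
    (hd : ∀ e ∈ q.edges, 0 ≤ d e) {f : Sym2 V} (hf : f ∈ q.edges) : d f ≤ walkCost d q :=
  List.single_le_sum (by simpa using hd) _ (List.mem_map_of_mem hf)

theorem walkCost_cons_nil {K : SimpleGraph V} (d : Sym2 V → ℝ) {u v : V} (h : K.Adj u v) :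
    walkCost d (Walk.cons h Walk.nil) = d s(u, v) := by
  simp [walkCost]

theorem shortestPathUnion_subset_edgeSet (K : SimpleGraph V) (d : Sym2 V → ℝ) :
    shortestPathUnion K d ⊆ K.edgeSet :=
  fun _ ⟨_, _, p, _, hx⟩ ↦ p.edges_subset_edgeSet hx

theorem IsMaxSpanningTree.isShortestPath_cons_nil [Fintype V] {K T : SimpleGraph V}
    {w : Sym2 V → ℝ} (hT : IsMaxSpanningTree K w T) (hpos : ∀ e ∈ K.edgeSet, 0 < w e)
    {u v : V} (huv : T.Adj u v) :
    IsShortestPath (fun x ↦ 1 / w x) (Walk.cons (hT.1 huv) Walk.nil) := by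
  refine ⟨by simp [huv.ne], fun q _ ↦ ?_⟩
  have hdpos : ∀ e ∈ q.edges, 0 < 1 / w e :=
    fun e he ↦ one_div_pos.mpr (hpos e (q.edges_subset_edgeSet he))
  obtain ⟨f, hfq, hf⟩ := hT.exists_mem_edges_weight_le huv q
  calc walkCost (fun x ↦ 1 / w x) (Walk.cons (hT.1 huv) Walk.nil)
      _ = 1 / w s(u, v) := walkCost_cons_nil ..
      _ ≤ 1 / w f := one_div_le_one_div_of_le (hpos f (q.edges_subset_edgeSet hfq)) hf
      _ ≤ walkCost (fun x ↦ 1 / w x) q :=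
        le_walkCost_of_mem_edges q (fun e he ↦ (hdpos e he).le) hfq

end

theorem mst_subset_shortestPathUnion_subset_general {V : Type*} [Fintype V]
    (K : SimpleGraph V) (w : Sym2 V → ℝ)
    (hpos : ∀ e ∈ K.edgeSet, 0 < w e)
    (T : SimpleGraph V) (hT : IsMaxSpanningTree K w T) :
    T.edgeSet ⊆ shortestPathUnion K (fun x => 1 / w x) ∧
      shortestPathUnion K (fun x => 1 / w x) ⊆ K.edgeSet := by
  refine ⟨fun e he ↦ ?_, shortestPathUnion_subset_edgeSet K _⟩
  induction e with
  | h u v => exact ⟨u, v, _, hT.isShortestPath_cons_nil hpos he, by simp⟩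

/-- Let `K` be a finite connected weighted graph with positive injective edge
weights `w`, let `T` be its maximum spanning tree, and let `U` be the union,
over all vertices `s`, of the shortest-path trees rooted at `s` computed with
the distances `d(i,j) = 1 / w(i,j)`.  Then `T ⊆ U ⊆ K` as edge sets. -/
theorem mst_subset_shortestPathUnion_subset {V : Type*} [Fintype V]
    (K : SimpleGraph V) (hK : K.Connected) (w : Sym2 V → ℝ)
    (hpos : ∀ e ∈ K.edgeSet, 0 < w e) (hinj : Set.InjOn w K.edgeSet)
    (T : SimpleGraph V) (hT : IsMaxSpanningTree K w T) :
    T.edgeSet ⊆ shortestPathUnion K (fun x => 1 / w x) ∧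
      shortestPathUnion K (fun x => 1 / w x) ⊆ K.edgeSet :=
  mst_subset_shortestPathUnion_subset_general K w hpos T hT
end

section
/- Cut optimality for maximum spanning trees: a spanning tree T of a connected weighted graph K with injective weights is the maximum spanning tree if and only if for every edge e ∈ E(K) \ E(T), the weight of e is strictly less than the weight of every edge on the unique path in T joining the endpoints of e. -/
/-!
Everything rests on the edge exchange `T - f + e`: if `T` is a tree, `f` an edge of `T`, and the
endpoints of `e` lie in different components of `T - f`, then `T - f + e` is again a spanning tree,
of weight `W(T) - w f + w e`.

If `T` is maximal and `f` lies on the `T`-path between the endpoints of `e ∉ T`, then `T - f`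
separates those endpoints, so maximality gives `w e ≤ w f`, and injectivity makes it strict.
Conversely, let `T'` be another spanning tree and `e = uv ∈ T' \ T`. The `T`-path from `u` to `v`
leaves the component of `u` in `T' - e` through some edge `f ∈ T \ T'`, which by cut optimality is
heavier than `e`; so `T' - e + f` is a heavier spanning tree with one edge fewer outside `T`, and we
conclude by induction on `|T' \ T|`.
-/

open SimpleGraph

namespace SimpleGraph

variable {V : Type*} {G K : SimpleGraph V} {e : Sym2 V} {u v : V}

/-- `G - e + uv` -/
def exchange (G : SimpleGraph V) (e : Sym2 V) (u v : V) : SimpleGraph V :=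
  G.deleteEdges {e} ⊔ edge u v

lemma exchange_le (hG : G ≤ K) (huv : K.Adj u v) : G.exchange e u v ≤ K :=
  sup_le ((deleteEdges_le _).trans hG) ((edge_le_iff K).mpr (.inr huv))

lemma edgeSet_exchange (huv : u ≠ v) :
    (G.exchange e u v).edgeSet = insert s(u, v) (G.edgeSet \ {e}) := by
  rw [exchange, edgeSet_sup, edgeSet_deleteEdges, edgeSet_edge_of_ne huv, Set.union_singleton]

lemma mk_notMem_edgeSet_sdiff_of_not_reachable (h : ¬(G.deleteEdges {e}).Reachable u v) :
    s(u, v) ∉ G.edgeSet \ {e} := fun hmem =>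
  h (Adj.reachable (by rwa [← mem_edgeSet, edgeSet_deleteEdges]))

lemma IsAcyclic.isTree_of_card [Finite V] [Nonempty V] (hG : G.IsAcyclic)
    (hcard : G.edgeSet.ncard + 1 = Nat.card V) : G.IsTree := by
  obtain ⟨T, hGT, -, hT⟩ := connected_top.exists_isTree_le_of_le_of_isAcyclic le_top hG
  have hTcard := (isTree_iff_connected_and_card.mp hT).2
  rw [Nat.card_coe_set_eq] at hTcard
  have : G.edgeSet = T.edgeSet :=
    Set.eq_of_subset_of_ncard_le (edgeSet_mono hGT) (by omega)
  rwa [edgeSet_inj.mp this]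

lemma IsTree.eq_of_le {T : SimpleGraph V} (hG : G.IsTree) (hT : T.IsTree) (hle : G ≤ T) :
    G = T :=
  le_antisymm hle ((isTree_iff_minimal_connected.mp hT).2 hG.connected hle)

lemma IsAcyclic.not_reachable_deleteEdges_of_mem_edges (hG : G.IsAcyclic) {p : G.Walk u v}
    (hp : p.IsPath) {f : Sym2 V} (hf : f ∈ p.edges) : ¬(G.deleteEdges {f}).Reachable u v := by
  intro hr
  obtain ⟨q, hq⟩ := hr.exists_isPath
  have hpq : p = q.mapLe (deleteEdges_le {f}) :=
    congrArg Subtype.val ((hG.subsingleton_path u v).elim ⟨p, hp⟩ ⟨_, hq.mapLe _⟩)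
  rw [hpq, Walk.edges_mapLe_eq_edges] at hf
  simpa using q.edges_subset_edgeSet hf

lemma IsTree.exchange [Finite V] (hG : G.IsTree) (he : e ∈ G.edgeSet)
    (h : ¬(G.deleteEdges {e}).Reachable u v) : (G.exchange e u v).IsTree := by
  have huv : u ≠ v := by rintro rfl; exact h .rfl
  have := hG.connected.nonempty
  refine ((hG.isAcyclic.anti (deleteEdges_le _)).sup_edge_of_not_reachable h).isTree_of_card ?_
  rw [← SimpleGraph.exchange, edgeSet_exchange huv,
    Set.ncard_insert_of_notMem (mk_notMem_edgeSet_sdiff_of_not_reachable h),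
    Set.ncard_sdiff_singleton_add_one he, ← Nat.card_coe_set_eq]
  exact (isTree_iff_connected_and_card.mp hG).2

end SimpleGraph

def IsCutOptimal {V : Type*} (K : SimpleGraph V) (w : Sym2 V → ℝ) (T : SimpleGraph V) : Prop :=
  ∀ u v : V, K.Adj u v → ¬ T.Adj u v →
    ∀ p : T.Walk u v, p.IsPath → ∀ f ∈ p.edges, w s(u, v) < w f

section

variable {V : Type*} [Fintype V] {G K T T' : SimpleGraph V} {w : Sym2 V → ℝ} {e : Sym2 V}
  {u v : V}

lemma treeWeight_exchange (he : e ∈ G.edgeSet)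
    (h : ¬(G.deleteEdges {e}).Reachable u v) :
    treeWeight (G.exchange e u v) w = treeWeight G w - w e + w s(u, v) := by
  classical
  have huv : u ≠ v := by rintro rfl; exact h .rfl
  have hnew := mk_notMem_edgeSet_sdiff_of_not_reachable h
  have hfin : (Set.toFinite (G.exchange e u v).edgeSet).toFinset =
      insert s(u, v) ((Set.toFinite G.edgeSet).toFinset.erase e) := by
    ext; simp [edgeSet_exchange huv, and_comm]
  have hsplit := Finset.add_sum_erase _ w ((Set.toFinite G.edgeSet).mem_toFinset.mpr he)
  rw [treeWeight, treeWeight, hfin, Finset.sum_insert (by simpa [and_comm] using hnew)]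
  linarith

lemma IsMaxSpanningTree.isCutOptimal (hmax : IsMaxSpanningTree K w T)
    (hw : Set.InjOn w K.edgeSet) : IsCutOptimal K w T := by
  obtain ⟨hTK, hT, hmaxw⟩ := hmax
  intro u v hKuv hnT p hp f hf
  have hfT : f ∈ T.edgeSet := p.edges_subset_edgeSet hf
  have hsep := hT.isAcyclic.not_reachable_deleteEdges_of_mem_edges hp hf
  have hle := hmaxw _ (exchange_le hTK hKuv) (hT.exchange hfT hsep)
  rw [treeWeight_exchange hfT hsep] at hle
  refine lt_of_le_of_ne (by linarith) fun heq => hnT ?_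
  rw [← mem_edgeSet, hw hKuv (edgeSet_mono hTK hfT) heq]
  exact hfT

lemma IsCutOptimal.exists_exchange (hcut : IsCutOptimal K w T) (hTK : T ≤ K) (hT : T.IsTree)
    (hT'K : T' ≤ K) (hT' : T'.IsTree) (he : e ∈ T'.edgeSet \ T.edgeSet) :
    ∃ T'' ≤ K, T''.IsTree ∧ treeWeight T' w < treeWeight T'' w ∧
      T''.edgeSet \ T.edgeSet = (T'.edgeSet \ T.edgeSet) \ {e} := by
  induction e using Sym2.ind with | _ u v =>
  have hsep : ¬(T'.deleteEdges {s(u, v)}).Reachable u v :=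
    isBridge_iff.mp (isAcyclic_iff_forall_isBridge.mp hT'.isAcyclic he.1)
  obtain ⟨p, hp⟩ := hT.connected.exists_isPath u v
  obtain ⟨d, hd, hdu, hdv⟩ :=
    p.exists_boundary_dart {x | (T'.deleteEdges {s(u, v)}).Reachable u x} .rfl hsep
  have hcross : ¬(T'.deleteEdges {s(u, v)}).Reachable d.fst d.snd := fun h => hdv (hdu.trans h)
  refine ⟨T'.exchange s(u, v) d.fst d.snd, exchange_le hT'K (hTK d.adj),
    hT'.exchange he.1 hcross, ?_, ?_⟩
  · have hlt : w s(u, v) < w s(d.fst, d.snd) :=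
      hcut u v (hT'K he.1) he.2 p hp _ (List.mem_map_of_mem hd)
    rw [treeWeight_exchange he.1 hcross]
    linarith
  · rw [edgeSet_exchange d.adj.ne, Set.insert_sdiff_of_mem _ (T.mem_edgeSet.mpr d.adj),
      Set.sdiff_sdiff_comm]

lemma IsCutOptimal.treeWeight_le (hcut : IsCutOptimal K w T) (hTK : T ≤ K) (hT : T.IsTree)
    (hT'K : T' ≤ K) (hT' : T'.IsTree) : treeWeight T' w ≤ treeWeight T w := by
  induction hn : (T'.edgeSet \ T.edgeSet).ncard using Nat.strong_induction_on
    generalizing T' with | _ n ih =>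
  obtain hsub | ⟨e, he⟩ := (T'.edgeSet \ T.edgeSet).eq_empty_or_nonempty
  · rw [hT'.eq_of_le hT (edgeSet_subset_edgeSet.mp (Set.sdiff_eq_empty.mp hsub))]
  · obtain ⟨T'', hT''K, hT'', hlt, hdiff⟩ := hcut.exists_exchange hTK hT hT'K hT' he
    have hcard : (T''.edgeSet \ T.edgeSet).ncard < n := by
      rw [hdiff, ← hn]
      exact Set.ncard_sdiff_singleton_lt_of_mem he
    linarith [ih _ hcard hT''K hT'' rfl]

end

theorem maxSpanningTree_iff_cut_optimal_general {V : Type*} [Fintype V]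
    (K : SimpleGraph V) (w : Sym2 V → ℝ)
    (hw : Set.InjOn w K.edgeSet)
    (T : SimpleGraph V) (hT : T ≤ K) (hTtree : T.IsTree) :
    IsMaxSpanningTree K w T ↔
      ∀ u v : V, K.Adj u v → ¬ T.Adj u v →
        ∀ p : T.Walk u v, p.IsPath → ∀ f ∈ p.edges, w s(u, v) < w f :=
  ⟨fun hmax => hmax.isCutOptimal hw, fun hcut =>
    ⟨hT, hTtree, fun _ hT'K hT' => IsCutOptimal.treeWeight_le hcut hT hTtree hT'K hT'⟩⟩

/-- Cut optimality for maximum spanning trees: a spanning tree `T` of a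
connected weighted graph `K` with injective weights is the maximum spanning
tree if and only if for every edge `e = (u,v) ∈ E(K) \ E(T)`, the weight of
`e` is strictly less than the weight of every edge on the unique path in `T`
joining the endpoints of `e`. -/
theorem maxSpanningTree_iff_cut_optimal {V : Type*} [Fintype V]
    (K : SimpleGraph V) (hK : K.Connected) (w : Sym2 V → ℝ)
    (hw : Set.InjOn w K.edgeSet)
    (T : SimpleGraph V) (hT : T ≤ K) (hTtree : T.IsTree) :
    IsMaxSpanningTree K w T ↔
      ∀ u v : V, K.Adj u v → ¬ T.Adj u v →
        ∀ p : T.Walk u v, p.IsPath → ∀ f ∈ p.edges, w s(u, v) < w f :=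
  maxSpanningTree_iff_cut_optimal_general K w hw T hT hTtree
end
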